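/- (Achievability in Theorem 1.) Let h_1, …, h_L be vectors in ℂ^M, let Q_l denote the orthogonal projection onto the orthogonal complement of span{h_j : j ≠ l}, let P > 0, and suppose S := ∑_{l=1}^L ‖Q_l h_l‖² > 0. Define f_l := (√P / √S) · Q_l h_l for each l. Then the vectors f_1, …, f_L satisfy ⟨h_j, f_l⟩ = 0 for all j ≠ l, satisfy ∑_{l=1}^L ‖f_l‖² = P, and achieve |∑_{l=1}^L ⟨h_l, f_l⟩|² = P · S. -/

import Mathlib

open scoped ComplexInnerProductSpace

/-- `Qproj h l` is the orthogonal projection of `ℂ^M` onto the orthogonal complement of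
`span {h j : j ≠ l}`. -/
noncomputable def Qproj {M L : ℕ} (h : Fin L → EuclideanSpace ℂ (Fin M)) (l : Fin L)
    (x : EuclideanSpace ℂ (Fin M)) : EuclideanSpace ℂ (Fin M) :=
  (Submodule.orthogonalProjection ((Submodule.span ℂ (h '' {j | j ≠ l}))ᗮ) x : EuclideanSpace ℂ (Fin M))

lemma Qproj_inner_zero {M L : ℕ} (h : Fin L → EuclideanSpace ℂ (Fin M)) {j l : Fin L}
    (hjl : j ≠ l) : ⟪h j, Qproj h l (h l)⟫ = 0 := by
  have hmem : Qproj h l (h l) ∈ (Submodule.span ℂ (h '' {j | j ≠ l}))ᗮ :=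
    (Submodule.orthogonalProjection _ (h l)).2
  have hj : h j ∈ Submodule.span ℂ (h '' {j | j ≠ l}) :=
    Submodule.subset_span ⟨j, hjl, rfl⟩
  exact (Submodule.mem_orthogonal _ _).1 hmem (h j) hj

lemma Qproj_self_inner {M L : ℕ} (h : Fin L → EuclideanSpace ℂ (Fin M)) (l : Fin L) :
    ⟪h l, Qproj h l (h l)⟫ = (‖Qproj h l (h l)‖ : ℂ) ^ 2 := by
  unfold Qproj
  set K := (Submodule.span ℂ (h '' {j | j ≠ l}))ᗮ
  set v := Submodule.orthogonalProjection K (h l) with hv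
  have h0 : ⟪h l - (v : EuclideanSpace ℂ (Fin M)), (v : EuclideanSpace ℂ (Fin M))⟫ = 0 :=
    Submodule.starProjection_inner_eq_zero (h l) _ v.2
  rw [← sub_add_cancel (h l) (v : EuclideanSpace ℂ (Fin M)), inner_add_left, h0, zero_add,
    inner_self_eq_norm_sq_to_K]
  norm_num

/-- Achievability in Theorem 1: with `S = ∑ l ‖Q_l h_l‖² > 0`, the beamformers
`f l = (√P/√S) • Q_l h_l` satisfy the ISI-ZF condition, use full power `P`, and achieve
`|∑ l ⟨h l, f l⟩|² = P · S`. -/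
theorem stmt3 {M L : ℕ} (h : Fin L → EuclideanSpace ℂ (Fin M)) (P : ℝ) (hP : 0 < P)
    (hS : 0 < ∑ l, ‖Qproj h l (h l)‖ ^ 2) :
    (∀ j l : Fin L, j ≠ l →
      ⟪h j, (Real.sqrt P / Real.sqrt (∑ l', ‖Qproj h l' (h l')‖ ^ 2)) • Qproj h l (h l)⟫ = 0) ∧
    (∑ l, ‖(Real.sqrt P / Real.sqrt (∑ l', ‖Qproj h l' (h l')‖ ^ 2)) • Qproj h l (h l)‖ ^ 2 = P) ∧
    ‖∑ l, ⟪h l, (Real.sqrt P / Real.sqrt (∑ l', ‖Qproj h l' (h l')‖ ^ 2)) • Qproj h l (h l)⟫‖ ^ 2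
      = P * ∑ l, ‖Qproj h l (h l)‖ ^ 2 := by
  set S : ℝ := ∑ l, ‖Qproj h l (h l)‖ ^ 2 with hSdef
  set c : ℝ := Real.sqrt P / Real.sqrt S with hc
  have hcsq : c ^ 2 = P / S := by
    rw [hc, div_pow, Real.sq_sqrt hP.le, Real.sq_sqrt hS.le]
  refine ⟨fun j l hjl => ?_, ?_, ?_⟩
  · rw [RCLike.real_smul_eq_coe_smul (K := ℂ), inner_smul_right, Qproj_inner_zero h hjl, mul_zero]
  · have : ∀ l : Fin L, ‖c • Qproj h l (h l)‖ ^ 2 = c ^ 2 * ‖Qproj h l (h l)‖ ^ 2 := by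
      intro l
      rw [norm_smul, mul_pow, Real.norm_eq_abs, sq_abs]
    simp only [this]
    rw [← Finset.mul_sum, ← hSdef, hcsq, div_mul_cancel₀ _ (ne_of_gt hS)]
  · have : ∀ l : Fin L, ⟪h l, c • Qproj h l (h l)⟫ = (c : ℂ) * (‖Qproj h l (h l)‖ : ℂ) ^ 2 := by
      intro l
      rw [RCLike.real_smul_eq_coe_smul (K := ℂ), inner_smul_right, Qproj_self_inner h l]
      norm_num
    simp only [this]
    rw [← Finset.mul_sum]
    have hsum : ∑ l, ((‖Qproj h l (h l)‖ : ℂ)) ^ 2 = (S : ℂ) := by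
      rw [hSdef]
      push_cast
      rfl
    rw [hsum, norm_mul, mul_pow]
    rw [Complex.norm_real, Complex.norm_real, Real.norm_eq_abs, Real.norm_eq_abs,
      sq_abs, sq_abs, hcsq]
    field_simp
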